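/- arXiv:1709.00641 — 8 statements merged into one kernel-verified Lean document; each statement's English description precedes it below -/
import Mathlib

section
/- Let F be the cdf of a probability measure on ℝ^d with marginals F_1,...,F_d, let S ⊆ ℝ^d and (π_s)_{s∈S} be a family in [0,1] such that F(s) = π_s for all s ∈ S. Then for all x ∈ ℝ^d, F(x) ≤ min_i F_i(x_i) ∧ inf{ π_s + Σ_{i=1}^d (F_i(x_i) − F_i(s_i))^+ : s ∈ S }. -/
open MeasureTheory

/-!
A point `y ≤ x` either satisfies `y ≤ s`, or some coordinate has `s i < y i ≤ x i`.
Hence `{y ≤ x}` is covered by `{y ≤ s}` and the slabs `{s i < y i ≤ x i}`, and the slab in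
direction `i` has mass `(F_i(x_i) - F_i(s_i))⁺` because sublevel sets of one coordinate are
nested. Subadditivity gives the bound; the bound by `F_i(x_i)` is monotonicity.
-/

theorem setOf_forall_le_subset_union_iUnion {ι β : Type*} [LinearOrder β] (x s : ι → β) :
    {y : ι → β | ∀ j, y j ≤ x j} ⊆
      {y | ∀ j, y j ≤ s j} ∪ ⋃ i, {y | y i ≤ x i} \ {y | y i ≤ s i} := by
  intro y hy
  by_cases hys : ∀ j, y j ≤ s j
  · exact Or.inl hys
  · obtain ⟨i, hi⟩ := not_forall.1 hys
    exact Or.inr (Set.mem_iUnion.2 ⟨i, hy i, hi⟩)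

section

variable {α : Type*} [MeasurableSpace α] {μ : Measure α} [IsFiniteMeasure μ]

theorem measureReal_le_add_sum_of_subset_union_iUnion {ι : Type*} [Fintype ι]
    {A B : Set α} {C : ι → Set α} (h : A ⊆ B ∪ ⋃ i, C i) :
    μ.real A ≤ μ.real B + ∑ i, μ.real (C i) :=
  calc μ.real A ≤ μ.real (B ∪ ⋃ i, C i) := measureReal_mono h
    _ ≤ μ.real B + μ.real (⋃ i, C i) := measureReal_union_le _ _
    _ ≤ μ.real B + ∑ i, μ.real (C i) := by gcongr; exact measureReal_iUnion_fintype_le C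

theorem measureReal_sublevel_sdiff_sublevel {β : Type*} [LinearOrder β] [TopologicalSpace β]
    [OrderClosedTopology β] [MeasurableSpace β] [OpensMeasurableSpace β]
    {f : α → β} (hf : Measurable f) (a b : β) :
    μ.real ({y | f y ≤ a} \ {y | f y ≤ b}) =
      max (μ.real {y | f y ≤ a} - μ.real {y | f y ≤ b}) 0 := by
  rcases le_total b a with hba | hab
  · have hsub : {y | f y ≤ b} ⊆ {y | f y ≤ a} := fun y hy => le_trans hy hba
    rw [measureReal_sdiff hsub (hf measurableSet_Iic), max_eq_left]
    exact sub_nonneg.2 (measureReal_mono hsub)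
  · have hsub : {y | f y ≤ a} ⊆ {y | f y ≤ b} := fun y hy => le_trans hy hab
    rw [Set.sdiff_eq_empty.2 hsub, measureReal_empty, max_eq_right]
    exact sub_nonpos.2 (measureReal_mono hsub)

end

theorem improved_frechet_hoeffding_upper_general {d : ℕ} (μ : Measure (Fin d → ℝ))
    [IsProbabilityMeasure μ]
    (S : Set (Fin d → ℝ)) (π : (Fin d → ℝ) → ℝ)
    (hF : ∀ s ∈ S, (μ {y : Fin d → ℝ | ∀ j, y j ≤ s j}).toReal = π s)
    (x : Fin d → ℝ) :
    (∀ i, (μ {y : Fin d → ℝ | ∀ j, y j ≤ x j}).toReal ≤ (μ {y : Fin d → ℝ | y i ≤ x i}).toReal) ∧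
    (∀ s ∈ S, (μ {y : Fin d → ℝ | ∀ j, y j ≤ x j}).toReal ≤
      π s + ∑ i : Fin d,
        max ((μ {y : Fin d → ℝ | y i ≤ x i}).toReal - (μ {y : Fin d → ℝ | y i ≤ s i}).toReal) 0) := by
  refine ⟨fun i => measureReal_mono fun y hy => hy i, fun s hs => ?_⟩
  rw [← hF s hs]
  calc μ.real {y | ∀ j, y j ≤ x j}
      ≤ μ.real {y | ∀ j, y j ≤ s j} + ∑ i, μ.real ({y | y i ≤ x i} \ {y | y i ≤ s i}) :=
        measureReal_le_add_sum_of_subset_union_iUnion (setOf_forall_le_subset_union_iUnion x s)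
    _ = _ := by
        congr 1
        exact Finset.sum_congr rfl fun i _ =>
          measureReal_sublevel_sdiff_sublevel (μ := μ) (measurable_pi_apply i) (x i) (s i)

/-- Improved upper Fréchet–Hoeffding bound for the class `F^{S,π}`:
`F(x) ≤ min_i F_i(x_i) ∧ inf{π_s + Σ_i (F_i(x_i) − F_i(s_i))⁺ : s ∈ S}`. -/
theorem improved_frechet_hoeffding_upper {d : ℕ} (μ : Measure (Fin d → ℝ))
    [IsProbabilityMeasure μ]
    (S : Set (Fin d → ℝ)) (π : (Fin d → ℝ) → ℝ)
    (hπ : ∀ s ∈ S, π s ∈ Set.Icc (0 : ℝ) 1)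
    (hF : ∀ s ∈ S, (μ {y : Fin d → ℝ | ∀ j, y j ≤ s j}).toReal = π s)
    (x : Fin d → ℝ) :
    (∀ i, (μ {y : Fin d → ℝ | ∀ j, y j ≤ x j}).toReal ≤ (μ {y : Fin d → ℝ | y i ≤ x i}).toReal) ∧
    (∀ s ∈ S, (μ {y : Fin d → ℝ | ∀ j, y j ≤ x j}).toReal ≤
      π s + ∑ i : Fin d,
        max ((μ {y : Fin d → ℝ | y i ≤ x i}).toReal - (μ {y : Fin d → ℝ | y i ≤ s i}).toReal) 0) :=
  improved_frechet_hoeffding_upper_general μ S π hF x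
end

section
/- Let F be the cdf of a probability measure on ℝ^d with marginals F_1,...,F_d, let S ⊆ ℝ^d and (π_s)_{s∈S} be in [0,1] with F(s) = π_s for all s ∈ S. Then for all x ∈ ℝ^d, F(x) ≥ max( (Σ_{i=1}^d F_i(x_i) − (d−1))^+, sup{ π_s − Σ_{i=1}^d (F_i(s_i) − F_i(x_i))^+ : s ∈ S } ). -/
open MeasureTheory

/-- Improved lower Fréchet–Hoeffding bound for the class `F^{S,π}`:
`F(x) ≥ max((Σ_i F_i(x_i) − (d−1))⁺, sup{π_s − Σ_i (F_i(s_i) − F_i(x_i))⁺ : s ∈ S})`. -/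
theorem improved_frechet_hoeffding_lower {d : ℕ} (μ : Measure (Fin d → ℝ))
    [IsProbabilityMeasure μ]
    (S : Set (Fin d → ℝ)) (π : (Fin d → ℝ) → ℝ)
    (hπ : ∀ s ∈ S, π s ∈ Set.Icc (0 : ℝ) 1)
    (hF : ∀ s ∈ S, (μ {y : Fin d → ℝ | ∀ j, y j ≤ s j}).toReal = π s)
    (x : Fin d → ℝ) :
    max 0 ((∑ i : Fin d, (μ {y : Fin d → ℝ | y i ≤ x i}).toReal) - ((d : ℝ) - 1))
      ≤ (μ {y : Fin d → ℝ | ∀ j, y j ≤ x j}).toReal ∧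
    (∀ s ∈ S, π s - ∑ i : Fin d,
        max ((μ {y : Fin d → ℝ | y i ≤ s i}).toReal - (μ {y : Fin d → ℝ | y i ≤ x i}).toReal) 0
      ≤ (μ {y : Fin d → ℝ | ∀ j, y j ≤ x j}).toReal) := by
  have hmeas : ∀ (z : Fin d → ℝ) (i : Fin d), MeasurableSet {y : Fin d → ℝ | y i ≤ z i} :=
    fun z i => measurableSet_le (measurable_pi_apply i) measurable_const
  have hA : ∀ z : Fin d → ℝ, MeasurableSet {y : Fin d → ℝ | ∀ j, y j ≤ z j} := by
    intro z
    have : {y : Fin d → ℝ | ∀ j, y j ≤ z j} = ⋂ j, {y : Fin d → ℝ | y j ≤ z j} := by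
      ext y; simp [Set.mem_iInter]
    rw [this]; exact MeasurableSet.iInter fun j => hmeas z j
  have hcompl_toReal : ∀ (t : Set (Fin d → ℝ)), MeasurableSet t →
      (μ tᶜ).toReal = 1 - (μ t).toReal := by
    intro t ht
    rw [measure_compl ht (measure_ne_top μ t), measure_univ,
      ENNReal.toReal_sub_of_le prob_le_one ENNReal.one_ne_top, ENNReal.toReal_one]
  constructor
  · apply max_le ENNReal.toReal_nonneg
    have hsub : {y : Fin d → ℝ | ∀ j, y j ≤ x j}ᶜ ⊆ ⋃ i, {y : Fin d → ℝ | y i ≤ x i}ᶜ := by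
      intro y hy
      simp only [Set.mem_compl_iff, Set.mem_setOf_eq, not_forall] at hy
      obtain ⟨j, hj⟩ := hy
      exact Set.mem_iUnion.2 ⟨j, hj⟩
    have h1 : μ ({y : Fin d → ℝ | ∀ j, y j ≤ x j}ᶜ)
        ≤ ∑ i, μ ({y : Fin d → ℝ | y i ≤ x i}ᶜ) :=
      calc μ ({y : Fin d → ℝ | ∀ j, y j ≤ x j}ᶜ)
          ≤ μ (⋃ i, {y : Fin d → ℝ | y i ≤ x i}ᶜ) := measure_mono hsub
        _ ≤ ∑' i, μ ({y : Fin d → ℝ | y i ≤ x i}ᶜ) := measure_iUnion_le _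
        _ = ∑ i, μ ({y : Fin d → ℝ | y i ≤ x i}ᶜ) := tsum_fintype _
    have h2 : (μ ({y : Fin d → ℝ | ∀ j, y j ≤ x j}ᶜ)).toReal
        ≤ ∑ i, (μ ({y : Fin d → ℝ | y i ≤ x i}ᶜ)).toReal := by
      rw [← ENNReal.toReal_sum (fun i _ => measure_ne_top μ _)]
      exact ENNReal.toReal_mono (ENNReal.sum_ne_top.2 fun i _ => measure_ne_top μ _) h1
    rw [hcompl_toReal _ (hA x)] at h2
    have h3 : ∑ i, (μ ({y : Fin d → ℝ | y i ≤ x i}ᶜ)).toReal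
        = ∑ i, (1 - (μ {y : Fin d → ℝ | y i ≤ x i}).toReal) :=
      Finset.sum_congr rfl fun i _ => hcompl_toReal _ (hmeas x i)
    rw [h3, Finset.sum_sub_distrib, Finset.sum_const, Finset.card_univ,
      Fintype.card_fin] at h2
    simp only [nsmul_eq_mul, mul_one] at h2
    linarith
  · intro s hs
    rw [← hF s hs]
    set A := {y : Fin d → ℝ | ∀ j, y j ≤ x j}
    set B := {y : Fin d → ℝ | ∀ j, y j ≤ s j}
    have hsub : B ⊆ A ∪ ⋃ i, ({y : Fin d → ℝ | y i ≤ s i} \ {y : Fin d → ℝ | y i ≤ x i}) := by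
      intro y hy
      by_cases hyA : y ∈ A
      · exact Or.inl hyA
      · simp only [A, Set.mem_setOf_eq, not_forall] at hyA
        obtain ⟨j, hj⟩ := hyA
        exact Or.inr (Set.mem_iUnion.2 ⟨j, hy j, hj⟩)
    have h1 : μ B ≤ μ A + ∑ i, μ ({y : Fin d → ℝ | y i ≤ s i} \ {y : Fin d → ℝ | y i ≤ x i}) :=
      calc μ B ≤ μ (A ∪ ⋃ i, ({y : Fin d → ℝ | y i ≤ s i} \ {y : Fin d → ℝ | y i ≤ x i})) :=
            measure_mono hsub
        _ ≤ μ A + μ (⋃ i, ({y : Fin d → ℝ | y i ≤ s i} \ {y : Fin d → ℝ | y i ≤ x i})) :=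
            measure_union_le _ _
        _ ≤ μ A + ∑' i, μ ({y : Fin d → ℝ | y i ≤ s i} \ {y : Fin d → ℝ | y i ≤ x i}) := by
            gcongr; exact measure_iUnion_le _
        _ = μ A + ∑ i, μ ({y : Fin d → ℝ | y i ≤ s i} \ {y : Fin d → ℝ | y i ≤ x i}) := by
            rw [tsum_fintype]
    have h2 : (μ B).toReal
        ≤ (μ A).toReal
          + ∑ i, (μ ({y : Fin d → ℝ | y i ≤ s i} \ {y : Fin d → ℝ | y i ≤ x i})).toReal := by
      rw [← ENNReal.toReal_sum (fun i _ => measure_ne_top μ _), ← ENNReal.toReal_add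
        (measure_ne_top μ _) (ENNReal.sum_ne_top.2 fun i _ => measure_ne_top μ _)]
      exact ENNReal.toReal_mono (ENNReal.add_ne_top.2
        ⟨measure_ne_top μ _, ENNReal.sum_ne_top.2 fun i _ => measure_ne_top μ _⟩) h1
    have h3 : ∀ i : Fin d,
        (μ ({y : Fin d → ℝ | y i ≤ s i} \ {y : Fin d → ℝ | y i ≤ x i})).toReal
        ≤ max ((μ {y : Fin d → ℝ | y i ≤ s i}).toReal
            - (μ {y : Fin d → ℝ | y i ≤ x i}).toReal) 0 := by
      intro i
      by_cases hxs : x i ≤ s i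
      · have hDC : {y : Fin d → ℝ | y i ≤ x i} ⊆ {y : Fin d → ℝ | y i ≤ s i} :=
          fun y hy => le_trans hy hxs
        rw [measure_diff hDC (hmeas x i).nullMeasurableSet (measure_ne_top μ _),
          ENNReal.toReal_sub_of_le (measure_mono hDC) (measure_ne_top μ _)]
        exact le_max_left _ _
      · have hCD : {y : Fin d → ℝ | y i ≤ s i} ⊆ {y : Fin d → ℝ | y i ≤ x i} :=
          fun y hy => le_trans hy (le_of_lt (lt_of_not_ge hxs))
        have : {y : Fin d → ℝ | y i ≤ s i} \ {y : Fin d → ℝ | y i ≤ x i} = ∅ :=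
          Set.diff_eq_empty.2 hCD
        rw [this]
        simp
    have h4 : ∑ i, (μ ({y : Fin d → ℝ | y i ≤ s i} \ {y : Fin d → ℝ | y i ≤ x i})).toReal
        ≤ ∑ i, max ((μ {y : Fin d → ℝ | y i ≤ s i}).toReal
            - (μ {y : Fin d → ℝ | y i ≤ x i}).toReal) 0 :=
      Finset.sum_le_sum fun i _ => h3 i
    linarith
end

section
/- Let c ∈ [0,1] and let F be a cdf on ℝ^d with marginals F_1,...,F_d. Let F_1*,...,F_d* be cdfs on ℝ such that cF_i ⪯_0 F_i* for each i (i.e. cF_i(t) − cF_i(s) ≤ F_i*(t) − F_i*(s) for all s ≤ t), let S ⊆ ℝ^d and π_s ∈ [0,1] with cF(s) ≤ π_s for s ∈ S. Then the function G = cF satisfies, for all x ∈ ℝ^d: G(x) ≤ min_i F_i*(x_i) ∧ inf{ π_s + Σ_{i=1}^d (F_i*(x_i) − F_i*(s_i))^+ : s ∈ S }. -/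
/-! The bound `c F(x) ≤ F_i*(x_i)` passes through the marginal, `c F(x) ≤ c F_i(x_i)`, and then
compares the increments of `c F_i` and `F_i*` over `(u, x_i]` as `u → -∞`, where both vanish.
For the second bound, the box below `x` is covered by the box below `s` and the strips
`s_i < y_i ≤ x_i`, and the `c`-mass of each strip is dominated by `(F_i*(x_i) - F_i*(s_i))⁺`. -/

open MeasureTheory Filter Set Topology

/-- The paper's `g ⪯₀ h`. -/
def IncrementsLE (g h : ℝ → ℝ) : Prop :=
  ∀ u t, u ≤ t → g t - g u ≤ h t - h u

namespace IncrementsLE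

variable {g h : ℝ → ℝ}

theorem le_of_tendsto_atBot (hgh : IncrementsLE g h) (hg : Tendsto g atBot (𝓝 0))
    (hh : Tendsto h atBot (𝓝 0)) (t : ℝ) : g t ≤ h t := by
  have hlim : Tendsto (fun u => g u - h u) atBot (𝓝 0) := by simpa using hg.sub hh
  have hbound : ∀ᶠ u in atBot, g t - h t ≤ g u - h u :=
    eventually_le_atBot t |>.mono fun u hut => by linarith [hgh u t hut]
  exact sub_nonpos.1 (ge_of_tendsto hlim hbound)

theorem posPart_sub_le (hgh : IncrementsLE g h) (hg : Monotone g) (u t : ℝ) :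
    max (g t - g u) 0 ≤ max (h t - h u) 0 := by
  rcases le_total u t with hut | htu
  · exact max_le_max (hgh u t hut) le_rfl
  · rw [max_eq_right (sub_nonpos.2 (hg htu))]
    exact le_max_right _ _

end IncrementsLE

section Measure

variable {α : Type*} [MeasurableSpace α] (μ : Measure α) [IsFiniteMeasure μ]

theorem tendsto_measureReal_setOf_le_atBot {f : α → ℝ} (hf : Measurable f) :
    Tendsto (fun t => μ.real {y | f y ≤ t}) atBot (𝓝 0) := by
  have hempty : ⋂ t : ℝ, {y | f y ≤ t} = ∅ :=
    eq_empty_of_forall_notMem fun y hy => by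
      have hlt : f y ≤ f y - 1 := mem_iInter.1 hy (f y - 1)
      linarith
  have hlim := tendsto_measure_iInter_atBot (μ := μ) (s := fun t : ℝ => {y | f y ≤ t})
    (fun t => (hf measurableSet_Iic).nullMeasurableSet)
    (fun u t hut y hy => le_trans hy hut) ⟨0, measure_ne_top μ _⟩
  rw [hempty, measure_empty] at hlim
  exact (ENNReal.tendsto_toReal ENNReal.zero_ne_top).comp hlim

theorem measureReal_preimage_Ioc {f : α → ℝ} (hf : Measurable f) (a b : ℝ) :
    μ.real (f ⁻¹' Ioc a b) = max (μ.real (f ⁻¹' Iic b) - μ.real (f ⁻¹' Iic a)) 0 := by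
  rcases le_or_gt a b with hab | hba
  · have hdiff : μ.real (f ⁻¹' Ioc a b) = μ.real (f ⁻¹' Iic b) - μ.real (f ⁻¹' Iic a) := by
      rw [← Iic_sdiff_Iic, preimage_sdiff]
      exact measureReal_sdiff (preimage_mono (Iic_subset_Iic.2 hab)) (hf measurableSet_Iic)
    rw [hdiff, max_eq_left (hdiff ▸ measureReal_nonneg)]
  · have hmono : μ.real (f ⁻¹' Iic b) ≤ μ.real (f ⁻¹' Iic a) :=
      measureReal_mono (preimage_mono (Iic_subset_Iic.2 hba.le))
    rw [Ioc_eq_empty hba.not_gt, preimage_empty, measureReal_empty,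
      max_eq_right (sub_nonpos.2 hmono)]

end Measure

/-- A point below `x` but not below `s` exceeds `s` in some coordinate `i`, where it lies in
the strip `s i < y i ≤ x i`. -/
theorem measureReal_setOf_forall_le_le {ι : Type*} [Fintype ι] (μ : Measure (ι → ℝ))
    [IsFiniteMeasure μ] (x s : ι → ℝ) :
    μ.real {y | ∀ j, y j ≤ x j} ≤ μ.real {y | ∀ j, y j ≤ s j} +
      ∑ i, max (μ.real {y | y i ≤ x i} - μ.real {y | y i ≤ s i}) 0 := by
  have hcover : {y : ι → ℝ | ∀ j, y j ≤ x j} ⊆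
      {y | ∀ j, y j ≤ s j} ∪ ⋃ i, (fun y => y i) ⁻¹' Ioc (s i) (x i) := by
    intro y hy
    by_cases hys : ∀ j, y j ≤ s j
    · exact Or.inl hys
    · obtain ⟨i, hi⟩ := not_forall.1 hys
      exact Or.inr (mem_iUnion.2 ⟨i, lt_of_not_ge hi, hy i⟩)
  calc μ.real {y | ∀ j, y j ≤ x j}
      ≤ μ.real {y | ∀ j, y j ≤ s j} + μ.real (⋃ i, (fun y => y i) ⁻¹' Ioc (s i) (x i)) :=
        (measureReal_mono hcover).trans (measureReal_union_le _ _)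
    _ ≤ μ.real {y | ∀ j, y j ≤ s j} + ∑ i, μ.real ((fun y => y i) ⁻¹' Ioc (s i) (x i)) := by
        gcongr
        exact measureReal_iUnion_fintype_le _
    _ = _ := by
        simp_rw [measureReal_preimage_Ioc μ (measurable_pi_apply _)]
        rfl

theorem improved_upper_bound_zero_order_general {d : ℕ} (c : ℝ) (hc : c ∈ Set.Icc (0 : ℝ) 1)
    (μ : Measure (Fin d → ℝ)) [IsProbabilityMeasure μ]
    (ν : Fin d → Measure ℝ) (hν : ∀ i, IsProbabilityMeasure (ν i))
    (hdom : ∀ (i : Fin d) (u t : ℝ), u ≤ t →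
      c * (μ {y : Fin d → ℝ | y i ≤ t}).toReal - c * (μ {y : Fin d → ℝ | y i ≤ u}).toReal
        ≤ (ν i (Set.Iic t)).toReal - (ν i (Set.Iic u)).toReal)
    (S : Set (Fin d → ℝ)) (π : (Fin d → ℝ) → ℝ)
    (hF : ∀ s ∈ S, c * (μ {y : Fin d → ℝ | ∀ j, y j ≤ s j}).toReal ≤ π s)
    (x : Fin d → ℝ) :
    (∀ i, c * (μ {y : Fin d → ℝ | ∀ j, y j ≤ x j}).toReal ≤ (ν i (Set.Iic (x i))).toReal) ∧
    (∀ s ∈ S, c * (μ {y : Fin d → ℝ | ∀ j, y j ≤ x j}).toReal ≤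
      π s + ∑ i : Fin d, max ((ν i (Set.Iic (x i))).toReal - (ν i (Set.Iic (s i))).toReal) 0) := by
  have hc0 : 0 ≤ c := hc.1
  have hdom' : ∀ i, IncrementsLE (fun t => c * μ.real {y | y i ≤ t}) fun t => (ν i).real (Iic t) :=
    hdom
  refine ⟨fun i => ?_, fun s hs => ?_⟩
  · have := hν i
    calc c * μ.real {y | ∀ j, y j ≤ x j} ≤ c * μ.real {y | y i ≤ x i} :=
          mul_le_mul_of_nonneg_left (measureReal_mono fun y hy => hy i) hc0
      _ ≤ (ν i).real (Iic (x i)) :=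
          (hdom' i).le_of_tendsto_atBot
            (by simpa using
              (tendsto_measureReal_setOf_le_atBot μ (measurable_pi_apply i)).const_mul c)
            (tendsto_measureReal_setOf_le_atBot (ν i) measurable_id) (x i)
  · calc c * μ.real {y | ∀ j, y j ≤ x j}
        ≤ c * (μ.real {y | ∀ j, y j ≤ s j} +
            ∑ i, max (μ.real {y | y i ≤ x i} - μ.real {y | y i ≤ s i}) 0) := by
          gcongr
          exact measureReal_setOf_forall_le_le μ x s
      _ = c * μ.real {y | ∀ j, y j ≤ s j} +
            ∑ i, max (c * μ.real {y | y i ≤ x i} - c * μ.real {y | y i ≤ s i}) 0 := by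
          simp_rw [mul_add, Finset.mul_sum, mul_max_of_nonneg _ _ hc0, mul_sub, mul_zero]
      _ ≤ _ := add_le_add (hF s hs) <| Finset.sum_le_sum fun i _ =>
          (hdom' i).posPart_sub_le
            (fun u t hut =>
              mul_le_mul_of_nonneg_left (measureReal_mono fun y hy => le_trans hy hut) hc0)
            (s i) (x i)

/-- Improved upper Fréchet–Hoeffding bound for the relaxed class `F^{S,π}_{⪯₀}`:
for `G = c·F` with marginals dominated in 0-th stochastic order by `F_i*` and
`c·F(s) ≤ π_s` on `S`, one has
`G(x) ≤ min_i F_i*(x_i) ∧ inf{π_s + Σ_i (F_i*(x_i) − F_i*(s_i))⁺ : s ∈ S}`. -/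
theorem improved_upper_bound_zero_order {d : ℕ} (c : ℝ) (hc : c ∈ Set.Icc (0 : ℝ) 1)
    (μ : Measure (Fin d → ℝ)) [IsProbabilityMeasure μ]
    (ν : Fin d → Measure ℝ) (hν : ∀ i, IsProbabilityMeasure (ν i))
    (hdom : ∀ (i : Fin d) (u t : ℝ), u ≤ t →
      c * (μ {y : Fin d → ℝ | y i ≤ t}).toReal - c * (μ {y : Fin d → ℝ | y i ≤ u}).toReal
        ≤ (ν i (Set.Iic t)).toReal - (ν i (Set.Iic u)).toReal)
    (S : Set (Fin d → ℝ)) (π : (Fin d → ℝ) → ℝ)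
    (hπ : ∀ s ∈ S, π s ∈ Set.Icc (0 : ℝ) 1)
    (hF : ∀ s ∈ S, c * (μ {y : Fin d → ℝ | ∀ j, y j ≤ s j}).toReal ≤ π s)
    (x : Fin d → ℝ) :
    (∀ i, c * (μ {y : Fin d → ℝ | ∀ j, y j ≤ x j}).toReal ≤ (ν i (Set.Iic (x i))).toReal) ∧
    (∀ s ∈ S, c * (μ {y : Fin d → ℝ | ∀ j, y j ≤ x j}).toReal ≤
      π s + ∑ i : Fin d, max ((ν i (Set.Iic (x i))).toReal - (ν i (Set.Iic (s i))).toReal) 0) :=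
  improved_upper_bound_zero_order_general c hc μ ν hν hdom S π hF x
end

section
/- Let F_1*,...,F_d* be cdfs of probability measures on ℝ, S a bounded subset of ℝ^d, π_s ∈ [0,1] for s ∈ S, and x ∈ ℝ^d. Suppose the class F^{S,π}_{⪯_1} = { F cdf on ℝ^d : F_i(t) ≤ F_i*(t) for all t and all i, and F(s) ≤ π_s for all s ∈ S } is considered. Then sup over F in this class of F(x) equals min_i F_i*(x_i) ∧ min{ π_s : s ∈ S, x ≤ s componentwise }, and the supremum is attained. -/
/-!
The bound is attained by `μ = m δ_x + η`, where `m` is the claimed supremum and `η` has total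
mass `1 - m` and lives far above `x` and `S`. Choose `b` above `x` and `S` (which is bounded).
The `i`-th marginal of `η` is `ν_i` with its mass on `(-∞, b_i + 1]` moved to `b_i + 1` and
diminished by `m`; since `m ≤ ν_i(-∞, x_i]`, adding the atom `m δ_{x_i}` keeps the marginal cdf
below that of `ν_i`. Any coupling of these marginals (a rescaled product measure) charges no
lower orthant below `b`, so `μ` gives mass `m` to `(-∞, x]` and at most `π_s` to `(-∞, s]`.
The reverse inequality is monotonicity of `μ`.
-/

open MeasureTheory Set
open scoped ENNReal

theorem exists_map_eval_eq_of_measure_univ_eq {ι : Type*} [Fintype ι] {X : ι → Type*}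
    [∀ i, MeasurableSpace (X i)] (ρ : ∀ i, Measure (X i)) {a : ℝ≥0∞} (ha : a ≠ ∞)
    (hρ : ∀ i, ρ i univ = a) : ∃ η : Measure (∀ i, X i), ∀ i, η.map (Function.eval i) = ρ i := by
  rcases eq_or_ne a 0 with rfl | ha₀
  · exact ⟨0, fun i => by rw [Measure.map_zero, eq_comm, ← Measure.measure_univ_eq_zero, hρ]⟩
  have : ∀ i, IsProbabilityMeasure (a⁻¹ • ρ i) := fun i =>
    ⟨by rw [Measure.smul_apply, hρ, smul_eq_mul, ENNReal.inv_mul_cancel ha₀ ha]⟩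
  refine ⟨a • Measure.pi fun i => a⁻¹ • ρ i, fun i => ?_⟩
  rw [Measure.map_smul, (measurePreserving_eval _ i).map_eq, smul_smul,
    ENNReal.mul_inv_cancel ha₀ ha, one_smul]

noncomputable def tailMeasure (ν : Measure ℝ) (M : ℝ) (m : ℝ≥0∞) : Measure ℝ :=
  ν.restrict (Ioi M) + (ν (Iic M) - m) • Measure.dirac M

section tailMeasure

variable (ν : Measure ℝ) {M : ℝ} {m : ℝ≥0∞}

theorem tailMeasure_Iic_of_lt {t : ℝ} (ht : t < M) : tailMeasure ν M m (Iic t) = 0 := by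
  simp [tailMeasure, Measure.restrict_apply measurableSet_Iic, (Iic_disjoint_Ioi ht.le).inter_eq,
    Measure.dirac_apply' _ measurableSet_Iic, not_le.2 ht]

theorem add_tailMeasure_of_Iic_subset {A : Set ℝ} (hm : m ≤ ν (Iic M)) (hA : MeasurableSet A)
    (hMA : Iic M ⊆ A) : m + tailMeasure ν M m A = ν A := by
  simp only [tailMeasure, Measure.add_apply, Measure.restrict_apply hA, Measure.smul_apply,
    Measure.dirac_apply_of_mem (hMA (mem_Iic.2 le_rfl)), smul_eq_mul, mul_one]
  rw [add_left_comm, add_tsub_cancel_of_le hm, ← measure_inter_add_sdiff A measurableSet_Ioi,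
    sdiff_eq, compl_Ioi, inter_eq_right.2 hMA]

theorem add_tailMeasure_Iic_le {u t : ℝ} (hu : m ≤ ν (Iic u)) (huM : u ≤ M) (hut : u ≤ t) :
    m + tailMeasure ν M m (Iic t) ≤ ν (Iic t) := by
  rcases lt_or_ge t M with htM | hMt
  · rw [tailMeasure_Iic_of_lt ν htM, add_zero]
    exact hu.trans (measure_mono (Iic_subset_Iic.2 hut))
  · exact (add_tailMeasure_of_Iic_subset ν (hu.trans (measure_mono (Iic_subset_Iic.2 huM)))
      measurableSet_Iic (Iic_subset_Iic.2 hMt)).le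

end tailMeasure

open Classical in
theorem exists_isProbabilityMeasure_marginal_le_and_Iic_eq {ι : Type*} [Fintype ι] [Nonempty ι]
    (ν : ι → Measure ℝ) [∀ i, IsProbabilityMeasure (ν i)] {x b : ι → ℝ} (hxb : x ≤ b)
    {m : ℝ≥0∞} (hm : ∀ i, m ≤ ν i (Iic (x i))) :
    ∃ μ : Measure (ι → ℝ), IsProbabilityMeasure μ ∧ (∀ i t, μ {y | y i ≤ t} ≤ ν i (Iic t)) ∧
      ∀ s ≤ b, μ (Iic s) = if x ≤ s then m else 0 := by
  let i₀ := Classical.arbitrary ι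
  have hxM : ∀ i, x i < b i + 1 := fun i => by linarith [hxb i]
  let ρ := fun i => tailMeasure (ν i) (b i + 1) m
  have hmM : ∀ i, m ≤ ν i (Iic (b i + 1)) := fun i =>
    (hm i).trans (measure_mono (Iic_subset_Iic.2 (hxM i).le))
  have hm₁ : m ≤ 1 := (hm i₀).trans prob_le_one
  have hρ : ∀ i, ρ i univ = 1 - m := fun i => ENNReal.eq_sub_of_add_eq (ne_top_of_le_ne_top
    ENNReal.one_ne_top hm₁) (by rw [add_comm, add_tailMeasure_of_Iic_subset _ (hmM i)
      MeasurableSet.univ (subset_univ _), measure_univ])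
  obtain ⟨η, hη⟩ :=
    exists_map_eval_eq_of_measure_univ_eq ρ (ENNReal.sub_ne_top ENNReal.one_ne_top) hρ
  have hηi : ∀ i {A : Set ℝ}, MeasurableSet A → η (Function.eval i ⁻¹' A) = ρ i A :=
    fun i A hA => by rw [← hη i, Measure.map_apply (measurable_pi_apply i) hA]
  have hη_Iic : ∀ s ≤ b, η (Iic s) = 0 := fun s hs =>
    measure_mono_null (fun y (hy : y ≤ s) => hy i₀) <| (hηi i₀ measurableSet_Iic).trans <|
      tailMeasure_Iic_of_lt _ (by linarith [hs i₀])
  refine ⟨m • Measure.dirac x + η, ⟨?_⟩, fun i t => ?_, fun s hs => ?_⟩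
  · rw [Measure.add_apply, Measure.smul_apply, measure_univ, smul_eq_mul, mul_one,
      ← preimage_univ (f := Function.eval i₀), hηi i₀ MeasurableSet.univ, hρ,
      add_tsub_cancel_of_le hm₁]
  · change m • Measure.dirac x (Function.eval i ⁻¹' Iic t) + η (Function.eval i ⁻¹' Iic t) ≤ _
    rw [smul_eq_mul, hηi i measurableSet_Iic]
    by_cases hxt : x i ≤ t
    · rw [Measure.dirac_apply_of_mem (show x ∈ Function.eval i ⁻¹' Iic t from hxt), mul_one]
      exact add_tailMeasure_Iic_le _ (hm i) (hxM i).le hxt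
    · rw [Measure.dirac_apply' _ (measurable_pi_apply i measurableSet_Iic),
        indicator_of_notMem (show x ∉ Function.eval i ⁻¹' Iic t from hxt), mul_zero, zero_add,
        tailMeasure_Iic_of_lt _ ((not_le.1 hxt).trans (hxM i))]
      exact zero_le
  · rw [Measure.add_apply, Measure.smul_apply, smul_eq_mul, hη_Iic s hs, add_zero]
    split_ifs with hxs
    · rw [Measure.dirac_apply_of_mem hxs, mul_one]
    · rw [Measure.dirac_apply' _ measurableSet_Iic, indicator_of_notMem hxs, mul_zero]

/-- Pointwise sharpness of the improved upper Fréchet–Hoeffding bound for the class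
`F^{S,π}_{⪯₁}`: the supremum of `F(x)` over all cdfs with marginals dominated (first order)
by `F_i*` and `F(s) ≤ π_s` on `S` equals
`min_i F_i*(x_i) ∧ min{π_s : s ∈ S, x ≤ s}`, and it is attained. -/
theorem sharpness_first_order {d : ℕ} [NeZero d]
    (ν : Fin d → Measure ℝ) (hν : ∀ i, IsProbabilityMeasure (ν i))
    (S : Set (Fin d → ℝ)) (hS : Bornology.IsBounded S)
    (π : (Fin d → ℝ) → ℝ) (hπ : ∀ s ∈ S, π s ∈ Set.Icc (0 : ℝ) 1)
    (x : Fin d → ℝ) :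
    IsGreatest
      {v : ℝ | ∃ μ : Measure (Fin d → ℝ), IsProbabilityMeasure μ ∧
        (∀ (i : Fin d) (t : ℝ),
          (μ {y : Fin d → ℝ | y i ≤ t}).toReal ≤ (ν i (Set.Iic t)).toReal) ∧
        (∀ s ∈ S, (μ {y : Fin d → ℝ | ∀ j, y j ≤ s j}).toReal ≤ π s) ∧
        v = (μ {y : Fin d → ℝ | ∀ j, y j ≤ x j}).toReal}
      (sInf ((Set.range fun i => (ν i (Set.Iic (x i))).toReal) ∪
        {p : ℝ | ∃ s ∈ S, (∀ i, x i ≤ s i) ∧ p = π s})) := by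
  set T := (Set.range fun i => (ν i (Set.Iic (x i))).toReal) ∪
    {p : ℝ | ∃ s ∈ S, (∀ i, x i ≤ s i) ∧ p = π s}
  have hT₀ : ∀ p ∈ T, 0 ≤ p := by
    rintro p (⟨i, rfl⟩ | ⟨s, hs, -, rfl⟩)
    exacts [ENNReal.toReal_nonneg, (hπ s hs).1]
  have hT : T.Nonempty := ⟨_, Or.inl ⟨0, rfl⟩⟩
  have hbdd : BddBelow T := ⟨0, hT₀⟩
  have hm₀ : 0 ≤ sInf T := le_csInf hT hT₀
  refine ⟨?_, ?_⟩
  · obtain ⟨b, hb⟩ := (hS.insert x).bddAbove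
    obtain ⟨μ, hμ, hmarg, hIic⟩ := exists_isProbabilityMeasure_marginal_le_and_Iic_eq ν
      (hb (mem_insert x S)) (m := ENNReal.ofReal (sInf T))
      fun i => ENNReal.ofReal_le_of_le_toReal (csInf_le hbdd (Or.inl ⟨i, rfl⟩))
    refine ⟨μ, hμ, fun i t => ENNReal.toReal_mono (measure_ne_top _ _) (hmarg i t),
      fun s hs => ?_, ?_⟩
    · change (μ (Iic s)).toReal ≤ π s
      rw [hIic s (hb (mem_insert_of_mem x hs))]
      split_ifs with hxs
      · rw [ENNReal.toReal_ofReal hm₀]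
        exact csInf_le hbdd (Or.inr ⟨s, hs, hxs, rfl⟩)
      · exact (hπ s hs).1
    · change sInf T = (μ (Iic x)).toReal
      rw [hIic x (hb (mem_insert x S)), if_pos le_rfl, ENNReal.toReal_ofReal hm₀]
  · rintro v ⟨μ, _, hmarg, hS', rfl⟩
    refine le_csInf hT ?_
    rintro p (⟨i, rfl⟩ | ⟨s, hs, hxs, rfl⟩)
    · exact (ENNReal.toReal_mono (measure_ne_top _ _)
        (measure_mono fun y (hy : y ≤ x) => hy i)).trans (hmarg i (x i))
    · exact (ENNReal.toReal_mono (measure_ne_top _ _)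
        (measure_mono fun y hy j => (hy j).trans (hxs j))).trans (hS' s hs)
end

section
/- Fix x ∈ ℝ^d, cdfs F_1*,...,F_d*, a bounded set S ⊆ ℝ^d, π_s ∈ [0,1], and suppose min_i F_i*(x_i) is less than or equal to π_s for every s ∈ S with x ≤ s. Choose r ∈ ℝ with r ≥ x_j + 1 and r ≥ s_j + 1 for all j and all s ∈ S. Define G_j(t) = F_j*(x_j)·1_{[x_j,r)}(t) + F_j*(t)·1_{[r,∞)}(t) and F(y) = min_j G_j(y_j). Then F is a cdf on ℝ^d, F_j(t) ≤ F_j*(t) for all t and j, F(s) ≤ π_s for all s ∈ S, and F(x) = min_j F_j*(x_j). -/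
/-!
Each `G_j` is the cdf of the law of `squash (x j) r X_j` with `X_j ∼ F_j*`: the mass of
`(-∞, x_j]` is moved to `x_j` and that of `(x_j, r)` to `r`. Since `squash` only moves mass
to the right, `G_j ≤ F_j*`. The comonotone coupling `(G_1⁻¹(U), …, G_d⁻¹(U))` of a uniform
`U` on `(0, 1)` has joint cdf `min_j G_j(y_j)`, because `G_j⁻¹(u) ≤ y_j ↔ u ≤ G_j(y_j)`.
Every `s ∈ S` lies below `r`, so `G_j(s_j)` is `F_j*(x_j)` when `x_j ≤ s_j` and `0` otherwise.
-/

open MeasureTheory Set ProbabilityTheory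

instance Real.isProbabilityMeasure_volume_restrict_Ioo_zero_one :
    IsProbabilityMeasure (volume.restrict (Ioo (0 : ℝ) 1)) :=
  ⟨by simp⟩

lemma Real.volume_restrict_Ioo_zero_one_of_mem_iff_le {s : Set ℝ} {m : ℝ} (hm₁ : m ≤ 1)
    (hs : ∀ u ∈ Ioo 0 1, u ∈ s ↔ u ≤ m) :
    volume.restrict (Ioo 0 1) s = ENNReal.ofReal m := by
  have hs' : s ∩ Ioo 0 1 = Iic m ∩ Ioo 0 1 := by
    ext u
    exact and_congr_left fun hu => hs u hu
  rw [Measure.restrict_apply' measurableSet_Ioo, hs']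
  refine le_antisymm ?_ ?_
  · calc volume (Iic m ∩ Ioo 0 1) ≤ volume (Ioc 0 m) :=
          measure_mono fun u hu => ⟨hu.2.1, hu.1⟩
      _ = ENNReal.ofReal m := by rw [Real.volume_Ioc, sub_zero]
  · calc ENNReal.ofReal m = volume (Ioo 0 m) := by rw [Real.volume_Ioo, sub_zero]
      _ ≤ volume (Iic m ∩ Ioo 0 1) :=
          measure_mono fun u hu => ⟨hu.2.le, hu.1, hu.2.trans_le hm₁⟩

namespace ProbabilityTheory

/-- Junk outside `(0, 1)`, where the set can be empty or unbounded below. -/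
noncomputable def quantile (ν : Measure ℝ) (u : ℝ) : ℝ := sInf {t | u ≤ cdf ν t}

section Quantile

variable {ν : Measure ℝ} {u : ℝ}

lemma bddBelow_setOf_le_cdf (hu : 0 < u) : BddBelow {t | u ≤ cdf ν t} := by
  obtain ⟨t₀, ht₀⟩ := ((tendsto_cdf_atBot ν).eventually (gt_mem_nhds hu)).exists_forall_of_atBot
  exact ⟨t₀, fun t ht => not_lt.1 fun htt₀ => (ht₀ t htt₀.le).not_ge ht⟩

lemma nonempty_setOf_le_cdf (hu : u < 1) : {t | u ≤ cdf ν t}.Nonempty :=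
  ((tendsto_cdf_atTop ν).eventually (eventually_ge_nhds hu)).exists

lemma le_cdf_quantile (hu : u < 1) : u ≤ cdf ν (quantile ν u) := by
  rw [← (cdf ν).iInf_Ioi_eq]
  refine le_ciInf fun ⟨s, hs⟩ => ?_
  obtain ⟨t, ht, hts⟩ := exists_lt_of_csInf_lt (nonempty_setOf_le_cdf hu) hs
  exact ht.trans (monotone_cdf ν hts.le)

lemma quantile_le_iff (hu : u ∈ Ioo 0 1) {y : ℝ} : quantile ν u ≤ y ↔ u ≤ cdf ν y :=
  ⟨fun h => (le_cdf_quantile hu.2).trans (monotone_cdf ν h),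
    fun h => csInf_le (bddBelow_setOf_le_cdf hu.1) h⟩

lemma monotoneOn_quantile : MonotoneOn (quantile ν) (Ioo 0 1) :=
  fun _ hu _ hv huv => (quantile_le_iff hu).2 <| huv.trans (le_cdf_quantile hv.2)

lemma aemeasurable_quantile : AEMeasurable (quantile ν) (volume.restrict (Ioo 0 1)) :=
  aemeasurable_restrict_of_monotoneOn measurableSet_Ioo monotoneOn_quantile

end Quantile

lemma map_quantile_volume_restrict_Ioo (ν : Measure ℝ) [IsProbabilityMeasure ν] :
    (volume.restrict (Ioo 0 1)).map (quantile ν) = ν := by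
  refine Measure.ext_of_Iic _ _ fun t => ?_
  rw [Measure.map_apply_of_aemeasurable aemeasurable_quantile measurableSet_Iic,
    Real.volume_restrict_Ioo_zero_one_of_mem_iff_le (cdf_le_one ν t), ofReal_cdf]
  exact fun u hu => quantile_le_iff hu

noncomputable def comonotoneCoupling {ι : Type*} (ν : ι → Measure ℝ) : Measure (ι → ℝ) :=
  (volume.restrict (Ioo 0 1)).map fun u i => quantile (ν i) u

section ComonotoneCoupling

variable {ι : Type*} [Finite ι] (ν : ι → Measure ℝ)

lemma aemeasurable_quantile_pi :
    AEMeasurable (fun u i => quantile (ν i) u) (volume.restrict (Ioo 0 1)) :=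
  aemeasurable_pi_lambda _ fun _ => aemeasurable_quantile

instance : IsProbabilityMeasure (comonotoneCoupling ν) :=
  Measure.isProbabilityMeasure_map (aemeasurable_quantile_pi ν)

lemma map_eval_comonotoneCoupling [∀ i, IsProbabilityMeasure (ν i)] (i : ι) :
    (comonotoneCoupling ν).map (fun z => z i) = ν i := by
  rw [comonotoneCoupling, AEMeasurable.map_map_of_aemeasurable
    (measurable_pi_apply i).aemeasurable (aemeasurable_quantile_pi ν)]
  exact map_quantile_volume_restrict_Ioo (ν i)

lemma comonotoneCoupling_Iic [Nonempty ι] (y : ι → ℝ) :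
    comonotoneCoupling ν (Iic y) = ENNReal.ofReal (⨅ i, cdf (ν i) (y i)) := by
  have hbdd : BddBelow (range fun i => cdf (ν i) (y i)) := (finite_range _).bddBelow
  rw [comonotoneCoupling,
    Measure.map_apply_of_aemeasurable (aemeasurable_quantile_pi ν) measurableSet_Iic,
    Real.volume_restrict_Ioo_zero_one_of_mem_iff_le
      ((ciInf_le hbdd (Classical.arbitrary ι)).trans (cdf_le_one _ _))]
  intro u hu
  simp only [mem_preimage, mem_Iic, Pi.le_def, le_ciInf_iff hbdd, quantile_le_iff hu]

end ComonotoneCoupling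

end ProbabilityTheory

noncomputable def squash (a b t : ℝ) : ℝ := if t ≤ a then a else max t b

lemma measurable_squash (a b : ℝ) : Measurable (squash a b) :=
  Measurable.ite measurableSet_Iic measurable_const (measurable_id.max measurable_const)

lemma le_squash (a b t : ℝ) : t ≤ squash a b t := by
  unfold squash
  split_ifs with h
  exacts [h, le_max_left t b]

lemma squash_preimage_Iic {a b : ℝ} (hab : a ≤ b) (t : ℝ) :
    squash a b ⁻¹' Iic t = if b ≤ t then Iic t else if a ≤ t then Iic a else ∅ := by
  ext s
  simp only [squash, mem_preimage, mem_Iic]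
  split_ifs <;> grind

lemma map_squash_Iic_le (ν : Measure ℝ) (a b t : ℝ) :
    ν.map (squash a b) (Iic t) ≤ ν (Iic t) := by
  rw [Measure.map_apply (measurable_squash a b) measurableSet_Iic]
  exact measure_mono fun s hs => (le_squash a b s).trans hs

lemma cdf_map_squash (ν : Measure ℝ) [IsProbabilityMeasure ν] {a b : ℝ} (hab : a ≤ b) (t : ℝ) :
    cdf (ν.map (squash a b)) t = if b ≤ t then cdf ν t else if a ≤ t then cdf ν a else 0 := by
  have := Measure.isProbabilityMeasure_map (μ := ν) (measurable_squash a b).aemeasurable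
  rw [cdf_eq_real, measureReal_def, Measure.map_apply (measurable_squash a b) measurableSet_Iic,
    squash_preimage_Iic hab]
  split_ifs <;> simp [cdf_eq_real, measureReal_def]

theorem sharpness_construction_case1_general {d : ℕ} [NeZero d]
    (ν : Fin d → Measure ℝ) (hν : ∀ j, IsProbabilityMeasure (ν j))
    (S : Set (Fin d → ℝ))
    (π : (Fin d → ℝ) → ℝ) (hπ : ∀ s ∈ S, π s ∈ Set.Icc (0 : ℝ) 1)
    (x : Fin d → ℝ)
    (hmin : ∀ s ∈ S, (∀ j, x j ≤ s j) →
      (⨅ j, (ν j (Set.Iic (x j))).toReal) ≤ π s)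
    (r : ℝ) (hrx : ∀ j, x j + 1 ≤ r) (hrS : ∀ s ∈ S, ∀ j, s j + 1 ≤ r)
    (G : Fin d → ℝ → ℝ)
    (hG : ∀ j t, G j t = if r ≤ t then (ν j (Set.Iic t)).toReal
      else if x j ≤ t then (ν j (Set.Iic (x j))).toReal else 0) :
    ∃ μ : Measure (Fin d → ℝ), IsProbabilityMeasure μ ∧
      (∀ y : Fin d → ℝ, (μ {z : Fin d → ℝ | ∀ j, z j ≤ y j}).toReal = ⨅ j, G j (y j)) ∧
      (∀ (j : Fin d) (t : ℝ),
        (μ {z : Fin d → ℝ | z j ≤ t}).toReal ≤ (ν j (Set.Iic t)).toReal) ∧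
      (∀ s ∈ S, (μ {z : Fin d → ℝ | ∀ j, z j ≤ s j}).toReal ≤ π s) ∧
      (μ {z : Fin d → ℝ | ∀ j, z j ≤ x j}).toReal = ⨅ j, (ν j (Set.Iic (x j))).toReal := by
  set νG : Fin d → Measure ℝ := fun j => (ν j).map (squash (x j) r)
  have : ∀ j, IsProbabilityMeasure (νG j) := fun j =>
    Measure.isProbabilityMeasure_map (measurable_squash (x j) r).aemeasurable
  have hG_cdf : ∀ j t, G j t = cdf (νG j) t := fun j t => by
    rw [hG, cdf_map_squash (ν j) (by linarith [hrx j])]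
    simp only [cdf_eq_real, measureReal_def]
  have hG_lt : ∀ j t, t < r → G j t = if x j ≤ t then (ν j (Iic (x j))).toReal else 0 :=
    fun j t ht => by rw [hG, if_neg ht.not_ge]
  have hF : ∀ y : Fin d → ℝ,
      (comonotoneCoupling νG {z | ∀ j, z j ≤ y j}).toReal = ⨅ j, G j (y j) := fun y => by
    rw [show {z : Fin d → ℝ | ∀ j, z j ≤ y j} = Iic y from rfl, comonotoneCoupling_Iic,
      ENNReal.toReal_ofReal (le_ciInf fun j => cdf_nonneg _ _)]
    simp only [hG_cdf]
  refine ⟨comonotoneCoupling νG, inferInstance, hF, fun j t => ?_, fun s hs => ?_, ?_⟩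
  · calc (comonotoneCoupling νG {z | z j ≤ t}).toReal = (νG j (Iic t)).toReal := by
          rw [← map_eval_comonotoneCoupling νG j,
            Measure.map_apply (measurable_pi_apply j) measurableSet_Iic]
          rfl
      _ ≤ (ν j (Iic t)).toReal :=
          ENNReal.toReal_mono (measure_ne_top _ _) (map_squash_Iic_le (ν j) _ _ t)
  · rw [hF]
    by_cases hxs : ∀ j, x j ≤ s j
    · refine (iInf_congr fun j => ?_).trans_le (hmin s hs hxs)
      rw [hG_lt j _ (by linarith [hrS s hs j]), if_pos (hxs j)]
    · obtain ⟨j, hj⟩ := not_forall.1 hxs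
      calc ⨅ j, G j (s j) ≤ G j (s j) := ciInf_le (finite_range _).bddBelow j
        _ = 0 := by rw [hG_lt j _ (by linarith [hrS s hs j]), if_neg hj]
        _ ≤ π s := (hπ s hs).1
  · rw [hF]
    exact iInf_congr fun j => by rw [hG_lt j _ (by linarith [hrx j]), if_pos le_rfl]

/-- Explicit construction (Case 1 of the sharpness proof): with
`G_j(t) = F_j*(x_j)·1_{[x_j,r)}(t) + F_j*(t)·1_{[r,∞)}(t)` and `F(y) = min_j G_j(y_j)`,
`F` is a cdf on `ℝ^d` whose marginals are dominated by `F_j*`, which satisfies `F(s) ≤ π_s`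
for `s ∈ S`, and `F(x) = min_j F_j*(x_j)`. -/
theorem sharpness_construction_case1 {d : ℕ} [NeZero d]
    (ν : Fin d → Measure ℝ) (hν : ∀ j, IsProbabilityMeasure (ν j))
    (S : Set (Fin d → ℝ)) (hS : Bornology.IsBounded S)
    (π : (Fin d → ℝ) → ℝ) (hπ : ∀ s ∈ S, π s ∈ Set.Icc (0 : ℝ) 1)
    (x : Fin d → ℝ)
    (hmin : ∀ s ∈ S, (∀ j, x j ≤ s j) →
      (⨅ j, (ν j (Set.Iic (x j))).toReal) ≤ π s)
    (r : ℝ) (hrx : ∀ j, x j + 1 ≤ r) (hrS : ∀ s ∈ S, ∀ j, s j + 1 ≤ r)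
    (G : Fin d → ℝ → ℝ)
    (hG : ∀ j t, G j t = if r ≤ t then (ν j (Set.Iic t)).toReal
      else if x j ≤ t then (ν j (Set.Iic (x j))).toReal else 0) :
    ∃ μ : Measure (Fin d → ℝ), IsProbabilityMeasure μ ∧
      (∀ y : Fin d → ℝ, (μ {z : Fin d → ℝ | ∀ j, z j ≤ y j}).toReal = ⨅ j, G j (y j)) ∧
      (∀ (j : Fin d) (t : ℝ),
        (μ {z : Fin d → ℝ | z j ≤ t}).toReal ≤ (ν j (Set.Iic t)).toReal) ∧
      (∀ s ∈ S, (μ {z : Fin d → ℝ | ∀ j, z j ≤ s j}).toReal ≤ π s) ∧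
      (μ {z : Fin d → ℝ | ∀ j, z j ≤ x j}).toReal = ⨅ j, (ν j (Set.Iic (x j))).toReal :=
  sharpness_construction_case1_general ν hν S π hπ x hmin r hrx hrS G hG
end

section
/- Let G_1,...,G_d : ℝ → [0,1] be nondecreasing, right-continuous functions with limits 0 at −∞ and 1 at +∞. Then F(y) := min_{j=1,...,d} G_j(y_j) is the cdf of a probability measure on ℝ^d with j-th marginal cdf equal to G_j. -/
open MeasureTheory

/-- The upper Fréchet–Hoeffding copula applied to arbitrary marginals yields a genuine
`d`-dimensional distribution function (the comonotone coupling): if `G_1,…,G_d` are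
nondecreasing, right-continuous, `[0,1]`-valued with limits `0` at `−∞` and `1` at `+∞`,
then `F(y) = min_j G_j(y_j)` is the cdf of a probability measure on `ℝ^d` with `j`-th
marginal cdf `G_j`. -/
theorem comonotone_coupling {d : ℕ} [NeZero d] (G : Fin d → ℝ → ℝ)
    (hmono : ∀ j, Monotone (G j))
    (hrc : ∀ (j : Fin d) (a : ℝ), ContinuousWithinAt (G j) (Set.Ici a) a)
    (h01 : ∀ j t, G j t ∈ Set.Icc (0 : ℝ) 1)
    (h0 : ∀ j, Filter.Tendsto (G j) Filter.atBot (nhds 0))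
    (h1 : ∀ j, Filter.Tendsto (G j) Filter.atTop (nhds 1)) :
    ∃ μ : Measure (Fin d → ℝ), IsProbabilityMeasure μ ∧
      (∀ y : Fin d → ℝ, (μ {z : Fin d → ℝ | ∀ j, z j ≤ y j}).toReal = ⨅ j, G j (y j)) ∧
      (∀ (j : Fin d) (t : ℝ), (μ {z : Fin d → ℝ | z j ≤ t}).toReal = G j t) := by
  classical
  have hI : Nonempty (Fin d) := ⟨⟨0, Nat.pos_of_ne_zero (NeZero.ne d)⟩⟩
  set q : Fin d → ℝ → ℝ :=
    fun j u => if u ∈ Set.Ioo (0:ℝ) 1 then sInf {t | u ≤ G j t} else 0 with hqdef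
  have hne : ∀ (j : Fin d) {u : ℝ}, u ∈ Set.Ioo (0:ℝ) 1 → {t | u ≤ G j t}.Nonempty := by
    intro j u hu
    have : ∀ᶠ t in Filter.atTop, u < G j t := (h1 j).eventually (eventually_gt_nhds hu.2)
    obtain ⟨t, ht⟩ := this.exists
    exact ⟨t, ht.le⟩
  have hbdd : ∀ (j : Fin d) {u : ℝ}, u ∈ Set.Ioo (0:ℝ) 1 → BddBelow {t | u ≤ G j t} := by
    intro j u hu
    have : ∀ᶠ t in Filter.atBot, G j t < u := (h0 j).eventually (eventually_lt_nhds hu.1)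
    obtain ⟨t0, ht0⟩ := this.exists
    refine ⟨t0, fun t ht => ?_⟩
    by_contra hlt
    push_neg at hlt
    exact absurd (le_trans ht (hmono j hlt.le)) (not_le.mpr ht0)
  have hgal : ∀ (j : Fin d) {u : ℝ}, u ∈ Set.Ioo (0:ℝ) 1 → ∀ t : ℝ,
      (q j u ≤ t ↔ u ≤ G j t) := by
    intro j u hu t
    simp only [hqdef, if_pos hu]
    constructor
    · intro hle
      have key : ∀ s ∈ Set.Ioi t, u ≤ G j s := by
        intro s hs
        obtain ⟨s', hs', hlt⟩ := exists_lt_of_csInf_lt (hne j hu) (lt_of_le_of_lt hle hs)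
        exact le_trans hs' (hmono j hlt.le)
      have htd : Filter.Tendsto (G j) (nhdsWithin t (Set.Ioi t)) (nhds (G j t)) :=
        (hrc j t).mono Set.Ioi_subset_Ici_self
      exact ge_of_tendsto htd (eventually_nhdsWithin_of_forall key)
    · intro h
      exact csInf_le (hbdd j hu) h
  have hqmeas : ∀ j, Measurable (q j) := by
    intro j
    apply measurable_of_Iic
    intro t
    have : q j ⁻¹' Set.Iic t =
        if 0 ≤ t then (Set.Ioo (0:ℝ) 1 ∩ Set.Iic (G j t)) ∪ (Set.Ioo (0:ℝ) 1)ᶜ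
        else Set.Ioo (0:ℝ) 1 ∩ Set.Iic (G j t) := by
      ext u
      by_cases hu : u ∈ Set.Ioo (0:ℝ) 1
      · have h2 : q j u ≤ t ↔ u ≤ G j t := hgal j hu t
        split_ifs with ht <;>
          simp [Set.mem_preimage, Set.mem_Iic, h2, hu]
      · have : q j u = 0 := if_neg hu
        split_ifs with ht <;>
          simp [Set.mem_preimage, Set.mem_Iic, this, hu, ht]
    rw [this]
    split_ifs <;>
      measurability
  set F : ℝ → (Fin d → ℝ) := fun u j => q j u with hFdef
  have hF : Measurable F := measurable_pi_lambda _ fun j => hqmeas j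
  set μ : Measure (Fin d → ℝ) := Measure.map F (volume.restrict (Set.Ioo 0 1)) with hμdef
  -- key volume computation
  have hvol : ∀ m : ℝ, m ∈ Set.Icc (0:ℝ) 1 →
      volume (Set.Iic m ∩ Set.Ioo (0:ℝ) 1) = ENNReal.ofReal m := by
    intro m hm
    rcases eq_or_lt_of_le hm.2 with h1' | h1'
    · have : Set.Iic m ∩ Set.Ioo (0:ℝ) 1 = Set.Ioo 0 1 := by
        ext u
        constructor
        · exact fun h => h.2
        · intro h; exact ⟨le_of_lt (h1' ▸ h.2), h⟩
      rw [this, Real.volume_Ioo, h1']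
      norm_num
    · have : Set.Iic m ∩ Set.Ioo (0:ℝ) 1 = Set.Ioc 0 m := by
        ext u
        constructor
        · intro h; exact ⟨h.2.1, h.1⟩
        · intro h; exact ⟨h.2, h.1, lt_of_le_of_lt h.2 h1'⟩
      rw [this, Real.volume_Ioc]
      norm_num
  -- preimage computation
  have hpre : ∀ (A : Set (Fin d → ℝ)) (m : ℝ), m ∈ Set.Icc (0:ℝ) 1 →
      MeasurableSet A →
      (∀ u ∈ Set.Ioo (0:ℝ) 1, (F u ∈ A ↔ u ≤ m)) →
      μ A = ENNReal.ofReal m := by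
    intro A m hm hA hiff
    rw [hμdef, Measure.map_apply hF hA, Measure.restrict_apply (hF hA)]
    have : F ⁻¹' A ∩ Set.Ioo 0 1 = Set.Iic m ∩ Set.Ioo (0:ℝ) 1 := by
      ext u
      simp only [Set.mem_inter_iff, Set.mem_preimage, Set.mem_Iic]
      constructor
      · intro h; exact ⟨(hiff u h.2).mp h.1, h.2⟩
      · intro h; exact ⟨(hiff u h.2).mpr h.1, h.2⟩
    rw [this, hvol m hm]
  have hprob : IsProbabilityMeasure μ := by
    constructor
    rw [hμdef, Measure.map_apply hF MeasurableSet.univ, Set.preimage_univ,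
      Measure.restrict_apply MeasurableSet.univ, Set.univ_inter, Real.volume_Ioo]
    norm_num
  refine ⟨μ, hprob, ?_, ?_⟩
  · intro y
    set m : ℝ := ⨅ j, G j (y j) with hmdef
    have hbR : BddBelow (Set.range fun j => G j (y j)) :=
      (Set.finite_range _).bddBelow
    have hm : m ∈ Set.Icc (0:ℝ) 1 := by
      constructor
      · exact le_ciInf fun j => (h01 j (y j)).1
      · exact le_trans (ciInf_le hbR (Classical.arbitrary (Fin d)))
          (h01 _ _).2
    have hA : MeasurableSet {z : Fin d → ℝ | ∀ j, z j ≤ y j} := by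
      have : {z : Fin d → ℝ | ∀ j, z j ≤ y j} = ⋂ j, {z | z j ≤ y j} := by
        ext z; simp
      rw [this]
      exact MeasurableSet.iInter fun j =>
        measurableSet_le (measurable_pi_apply j) measurable_const
    rw [hpre _ m hm hA ?_, ENNReal.toReal_ofReal hm.1]
    intro u hu
    simp only [Set.mem_setOf_eq, hFdef]
    constructor
    · intro h
      exact le_ciInf fun j => (hgal j hu (y j)).mp (h j)
    · intro h j
      exact (hgal j hu (y j)).mpr (le_trans h (ciInf_le hbR j))
  · intro j t
    have hm : G j t ∈ Set.Icc (0:ℝ) 1 := h01 j t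
    have hA : MeasurableSet {z : Fin d → ℝ | z j ≤ t} :=
      measurableSet_le (measurable_pi_apply j) measurable_const
    rw [hpre _ (G j t) hm hA ?_, ENNReal.toReal_ofReal hm.1]
    intro u hu
    simpa only [Set.mem_setOf_eq, hFdef] using hgal j hu t
end

section
/- With F*, S, π as in the preceding construction (F* = 0.1·1_{[0,1)} + 0.3·1_{[1,2)} + 0.35·1_{[2,3)} + 1_{[3,∞)}, S = {(0,0),(0,2),(2,0),(1,1)}, π_{(0,0)}=0, π_{(0,2)}=π_{(2,0)}=π_{(1,1)}=0.1), every cdf F of a probability measure on ℝ² with both marginals equal to F* and F(s) = π_s for all s ∈ S satisfies F(0,1) ≤ 0.05, whereas the improved upper Fréchet–Hoeffding bound at (0,1) equals 0.1. Hence the improved upper Fréchet–Hoeffding bound is not pointwise sharp for the class F^{S,π} in dimension 2. -/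
open MeasureTheory

/-- The improved upper Fréchet–Hoeffding bound is not pointwise sharp for `F^{S,π}` in
dimension 2: every cdf with both marginals `F*` and prescribed values `π_s` on
`S = {(0,0),(0,2),(2,0),(1,1)}` satisfies `F(0,1) ≤ 0.05`, whereas the improved upper
Fréchet–Hoeffding bound at `(0,1)` equals `0.1`. -/
theorem improved_bound_not_pointwise_sharp :
    let Fstar : ℝ → ℝ := fun t =>
      if t < 0 then 0 else if t < 1 then 0.1 else if t < 2 then 0.3
      else if t < 3 then 0.35 else 1
    (∀ μ : Measure (Fin 2 → ℝ), IsProbabilityMeasure μ →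
      (∀ t : ℝ, (μ {y : Fin 2 → ℝ | y 0 ≤ t}).toReal = Fstar t) →
      (∀ t : ℝ, (μ {y : Fin 2 → ℝ | y 1 ≤ t}).toReal = Fstar t) →
      (μ {y : Fin 2 → ℝ | y 0 ≤ 0 ∧ y 1 ≤ 0}).toReal = 0 →
      (μ {y : Fin 2 → ℝ | y 0 ≤ 0 ∧ y 1 ≤ 2}).toReal = 0.1 →
      (μ {y : Fin 2 → ℝ | y 0 ≤ 2 ∧ y 1 ≤ 0}).toReal = 0.1 →
      (μ {y : Fin 2 → ℝ | y 0 ≤ 1 ∧ y 1 ≤ 1}).toReal = 0.1 →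
      (μ {y : Fin 2 → ℝ | y 0 ≤ 0 ∧ y 1 ≤ 1}).toReal ≤ 0.05) ∧
    min (min (Fstar 0) (Fstar 1))
      (min (min (0 + (max (Fstar 0 - Fstar 0) 0 + max (Fstar 1 - Fstar 0) 0))
                (0.1 + (max (Fstar 0 - Fstar 0) 0 + max (Fstar 1 - Fstar 2) 0)))
           (min (0.1 + (max (Fstar 0 - Fstar 2) 0 + max (Fstar 1 - Fstar 0) 0))
                (0.1 + (max (Fstar 0 - Fstar 1) 0 + max (Fstar 1 - Fstar 1) 0)))) = 0.1 := by
  intro Fstar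
  constructor
  · intro μ hprob h0 h1 hπ00 hπ02 hπ20 hπ11
    -- key measurable sets
    set A : Set (Fin 2 → ℝ) := {y | y 0 ≤ 0 ∧ y 1 ≤ 1} with hAdef
    set B : Set (Fin 2 → ℝ) := {y | y 0 ≤ 1 ∧ y 1 ≤ 0} with hBdef
    set C : Set (Fin 2 → ℝ) := {y | y 0 ≤ 2 ∧ y 1 ≤ 0} with hCdef
    set E : Set (Fin 2 → ℝ) := {y | y 0 ≤ 2} \ {y | y 0 ≤ 1} with hEdef
    have m0 : ∀ t : ℝ, MeasurableSet {y : Fin 2 → ℝ | y 0 ≤ t} := fun t =>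
      measurableSet_le (measurable_pi_apply 0) measurable_const
    have m1 : ∀ t : ℝ, MeasurableSet {y : Fin 2 → ℝ | y 1 ≤ t} := fun t =>
      measurableSet_le (measurable_pi_apply 1) measurable_const
    have mB : MeasurableSet B := by
      have : B = {y : Fin 2 → ℝ | y 0 ≤ 1} ∩ {y : Fin 2 → ℝ | y 1 ≤ 0} := rfl
      rw [this]; exact (m0 1).inter (m1 0)
    -- marginal values
    have h01 : (μ {y : Fin 2 → ℝ | y 0 ≤ 1}).toReal = 0.3 := by
      have := h0 1; simp only [Fstar] at this; norm_num at this; linarith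
    have h02 : (μ {y : Fin 2 → ℝ | y 0 ≤ 2}).toReal = 0.35 := by
      have := h0 2; simp only [Fstar] at this; norm_num at this; linarith
    -- μ (A ∩ B) = 0
    have hABeq : A ∩ B = {y : Fin 2 → ℝ | y 0 ≤ 0 ∧ y 1 ≤ 0} := by
      ext y
      simp only [hAdef, hBdef, Set.mem_inter_iff, Set.mem_setOf_eq]
      constructor
      · rintro ⟨⟨ha, _⟩, ⟨_, hb⟩⟩; exact ⟨ha, hb⟩
      · rintro ⟨ha, hb⟩; exact ⟨⟨ha, by linarith⟩, ⟨by linarith, hb⟩⟩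
    have hAB0 : μ (A ∩ B) = 0 := by
      rw [hABeq]
      have hne := measure_ne_top μ {y : Fin 2 → ℝ | y 0 ≤ 0 ∧ y 1 ≤ 0}
      rcases (ENNReal.toReal_eq_zero_iff _).mp hπ00 with h | h
      · exact h
      · exact absurd h hne
    -- μ (A ∪ B) = μ A + μ B
    have hunion : μ (A ∪ B) = μ A + μ B := by
      have := measure_union_add_inter (μ := μ) A mB
      rw [hAB0, add_zero] at this
      exact this
    -- a + b ≤ 0.1
    have hsub : A ∪ B ⊆ {y : Fin 2 → ℝ | y 0 ≤ 1 ∧ y 1 ≤ 1} := by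
      rintro y (⟨ha, hb⟩ | ⟨ha, hb⟩) <;> exact ⟨by linarith, by linarith⟩
    have hab : (μ A).toReal + (μ B).toReal ≤ 0.1 := by
      have hmono : μ (A ∪ B) ≤ μ {y : Fin 2 → ℝ | y 0 ≤ 1 ∧ y 1 ≤ 1} :=
        measure_mono hsub
      have := ENNReal.toReal_mono (measure_ne_top μ _) hmono
      rw [hunion, ENNReal.toReal_add (measure_ne_top μ A) (measure_ne_top μ B)] at this
      linarith [hπ11 ▸ this]
    -- (μ E).toReal = 0.05
    have hEsub : {y : Fin 2 → ℝ | y 0 ≤ 1} ⊆ {y : Fin 2 → ℝ | y 0 ≤ 2} := by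
      intro y hy; simp only [Set.mem_setOf_eq] at *; linarith
    have hE : (μ E).toReal = 0.05 := by
      rw [hEdef, measure_diff hEsub (m0 1).nullMeasurableSet (measure_ne_top μ _),
        ENNReal.toReal_sub_of_le (measure_mono hEsub) (measure_ne_top μ _), h01, h02]
      norm_num
    -- C ⊆ B ∪ E
    have hCsub : C ⊆ B ∪ E := by
      rintro y ⟨ha, hb⟩
      rcases le_or_gt (y 0) 1 with h | h
      · exact Or.inl ⟨h, hb⟩
      · exact Or.inr ⟨ha, not_le.mpr h⟩
    have hb05 : (0.05 : ℝ) ≤ (μ B).toReal := by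
      have hmono : μ C ≤ μ B + μ E := le_trans (measure_mono hCsub) (measure_union_le B E)
      have hfin : μ B + μ E ≠ ⊤ :=
        ENNReal.add_ne_top.mpr ⟨measure_ne_top μ B, measure_ne_top μ E⟩
      have := ENNReal.toReal_mono hfin hmono
      rw [ENNReal.toReal_add (measure_ne_top μ B) (measure_ne_top μ E), hE] at this
      rw [hCdef] at this
      rw [hπ20] at this
      linarith
    linarith
  · simp only [Fstar]
    norm_num
end

section
/- Let x, s ∈ ℝ^d and let F be the cdf of a probability measure on ℝ^d with marginals F_1,...,F_d, such that F(s) ≥ π for some π ∈ [0,1]. Then F(x) ≥ π − Σ_{i=1}^d (F_i(s_i) − F_i(x_i))^+. -/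
open MeasureTheory

/-- One-point improved lower Fréchet–Hoeffding bound: if `F(s) ≥ π` then
`F(x) ≥ π − Σ_i (F_i(s_i) − F_i(x_i))⁺`. -/
theorem one_point_lower_bound {d : ℕ} (μ : Measure (Fin d → ℝ)) [IsProbabilityMeasure μ]
    (x s : Fin d → ℝ) (π : ℝ) (hπ : π ∈ Set.Icc (0 : ℝ) 1)
    (hs : π ≤ (μ {y : Fin d → ℝ | ∀ j, y j ≤ s j}).toReal) :
    π - ∑ i : Fin d,
        max ((μ {y : Fin d → ℝ | y i ≤ s i}).toReal - (μ {y : Fin d → ℝ | y i ≤ x i}).toReal) 0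
      ≤ (μ {y : Fin d → ℝ | ∀ j, y j ≤ x j}).toReal := by
  set A : Set (Fin d → ℝ) := {y | ∀ j, y j ≤ s j} with hA
  set B : Set (Fin d → ℝ) := {y | ∀ j, y j ≤ x j} with hB
  have hmeasB : ∀ i : Fin d, MeasurableSet {y : Fin d → ℝ | y i ≤ x i} := fun i =>
    measurableSet_le (measurable_pi_apply i) measurable_const
  -- A ⊆ B ∪ (A \ B)
  have h1 : μ A ≤ μ B + μ (A \ B) := by
    refine le_trans (measure_mono ?_) (measure_union_le _ _)
    intro y hy
    by_cases hyB : y ∈ B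
    · exact Or.inl hyB
    · exact Or.inr ⟨hy, hyB⟩
  -- A \ B ⊆ union of slab differences
  have h2 : μ (A \ B) ≤ ∑ i : Fin d,
      μ ({y : Fin d → ℝ | y i ≤ s i} \ {y : Fin d → ℝ | y i ≤ x i}) := by
    refine le_trans (measure_mono (?_ : A \ B ⊆ ⋃ i : Fin d,
        ({y : Fin d → ℝ | y i ≤ s i} \ {y : Fin d → ℝ | y i ≤ x i}))) ?_
    · rintro y ⟨hyA, hyB⟩
      simp only [hB, Set.mem_setOf_eq, not_forall, not_le] at hyB
      obtain ⟨i, hi⟩ := hyB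
      exact Set.mem_iUnion.2 ⟨i, hyA i, not_le.mpr hi⟩
    · exact measure_iUnion_fintype_le _ _
  -- each term bounded by the max
  have h3 : ∀ i : Fin d,
      (μ ({y : Fin d → ℝ | y i ≤ s i} \ {y : Fin d → ℝ | y i ≤ x i})).toReal ≤
        max ((μ {y : Fin d → ℝ | y i ≤ s i}).toReal -
          (μ {y : Fin d → ℝ | y i ≤ x i}).toReal) 0 := by
    intro i
    rcases le_or_gt (s i) (x i) with h | h
    · have : ({y : Fin d → ℝ | y i ≤ s i} \ {y : Fin d → ℝ | y i ≤ x i}) = ∅ := by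
        ext y; simp only [Set.mem_diff, Set.mem_setOf_eq, Set.mem_empty_iff_false, iff_false,
          not_and, not_not]
        intro hy; exact hy.trans h
      rw [this, measure_empty]
      simp only [ENNReal.toReal_zero]; exact le_max_right _ (0 : ℝ)
    · have hsub : {y : Fin d → ℝ | y i ≤ x i} ⊆ {y : Fin d → ℝ | y i ≤ s i} :=
        fun y hy => le_trans hy h.le
      rw [measure_diff hsub (hmeasB i).nullMeasurableSet (measure_ne_top μ _),
        ENNReal.toReal_sub_of_le (measure_mono hsub) (measure_ne_top μ _)]
      exact le_max_left _ _
  -- put together in ℝ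
  have hABfin := measure_ne_top μ (A \ B)
  have hsumfin : (∑ i : Fin d,
      μ ({y : Fin d → ℝ | y i ≤ s i} \ {y : Fin d → ℝ | y i ≤ x i})) ≠ ⊤ := by
    exact (ENNReal.sum_lt_top.mpr fun i _ => (measure_lt_top μ _)).ne
  have h2' : (μ (A \ B)).toReal ≤ ∑ i : Fin d,
      (μ ({y : Fin d → ℝ | y i ≤ s i} \ {y : Fin d → ℝ | y i ≤ x i})).toReal := by
    calc (μ (A \ B)).toReal ≤ (∑ i : Fin d,
        μ ({y : Fin d → ℝ | y i ≤ s i} \ {y : Fin d → ℝ | y i ≤ x i})).toReal :=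
          ENNReal.toReal_mono hsumfin h2
      _ = _ := ENNReal.toReal_sum fun i _ => measure_ne_top μ _
  have h1' : (μ A).toReal ≤ (μ B).toReal + (μ (A \ B)).toReal := by
    calc (μ A).toReal ≤ (μ B + μ (A \ B)).toReal :=
          ENNReal.toReal_mono (ENNReal.add_ne_top.mpr ⟨measure_ne_top μ _, hABfin⟩) h1
      _ = _ := ENNReal.toReal_add (measure_ne_top μ _) hABfin
  have h3' : (∑ i : Fin d,
      (μ ({y : Fin d → ℝ | y i ≤ s i} \ {y : Fin d → ℝ | y i ≤ x i})).toReal) ≤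
      ∑ i : Fin d, max ((μ {y : Fin d → ℝ | y i ≤ s i}).toReal -
        (μ {y : Fin d → ℝ | y i ≤ x i}).toReal) 0 :=
    Finset.sum_le_sum fun i _ => h3 i
  linarith
end
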